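/- arXiv:1212.0257 — 4 statements merged into one kernel-verified Lean document; each statement's English description precedes it below -/
import Mathlib

section
/- The height of an element α of the monoid M_n equals the cardinality of the complement of its image: h(α) = |Y_n \ α(Y_n)|, where h(α) = m_1 + ⋯ + m_n is the sum of the translation lengths of α. In particular h(α) ≥ 0, and h(α) = 0 if and only if α is a bijection. -/
def Translates (n : ℕ) (g : Fin n × ℕ → Fin n × ℕ) (m : Fin n → ℤ) : Prop :=
  ∃ K : Finset (Fin n × ℕ), ∀ x : Fin n × ℕ, x ∉ K →
    (g x).1 = x.1 ∧ ((g x).2 : ℤ) = (x.2 : ℤ) + m x.1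

/-!
Outside a finite set `K`, `α` shifts row `k` by `m k`. Choose a level `N` above every `m k`, above
`α(K)` and above the translates `x.2 + m x.1` of the points of `K`. Then every point at level
`≥ N` is hit, and `α` maps `{x | x.2 + m x.1 < N}` bijectively onto the part of `range α` below
`N`. Counting row by row, the points below `N` missed by `α` number
`∑ k, N - ∑ k, (N - m k) = ∑ k, m k`.
-/

open Finset

variable {ι : Type*}

def TranslatesOutside (α : ι × ℕ → ι × ℕ) (m : ι → ℤ) (K : Finset (ι × ℕ)) : Prop :=
  ∀ x, x ∉ K → (α x).1 = x.1 ∧ ((α x).2 : ℤ) = x.2 + m x.1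

def IsLevelAbove (α : ι × ℕ → ι × ℕ) (m : ι → ℤ) (K : Finset (ι × ℕ)) (N : ℕ) : Prop :=
  (∀ k, m k ≤ N) ∧ ∀ x ∈ K, (x.2 : ℤ) + m x.1 < N ∧ (α x).2 < N

theorem exists_isLevelAbove [Finite ι] (α : ι × ℕ → ι × ℕ) (m : ι → ℤ) (K : Finset (ι × ℕ)) :
    ∃ N, IsLevelAbove α m K N := by
  obtain ⟨a, ha⟩ := Finite.exists_le m
  obtain ⟨b, hb⟩ := Finite.exists_le fun x : K => max ((x.1.2 : ℤ) + m x.1.1) (α x).2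
  refine ⟨(max a b + 1).toNat, fun k => ?_, fun x hx => ?_⟩
  · have := ha k
    omega
  · have := hb ⟨x, hx⟩
    dsimp only at this
    omega

section EventualTranslation

variable {α : ι × ℕ → ι × ℕ} {m : ι → ℤ} {K : Finset (ι × ℕ)} {N : ℕ}

theorem IsLevelAbove.mem_range (hK : TranslatesOutside α m K) (hN : IsLevelAbove α m K N)
    {y : ι × ℕ} (hy : N ≤ y.2) : y ∈ Set.range α := by
  obtain ⟨k, p⟩ := y
  obtain ⟨q, hq⟩ : ∃ q : ℕ, (q : ℤ) = p - m k := ⟨((p : ℤ) - m k).toNat, by have := hN.1 k; omega⟩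
  have hqK : (k, q) ∉ K := fun hqK => by
    have := (hN.2 _ hqK).1
    dsimp only at this hy
    omega
  obtain ⟨h1, h2⟩ := hK _ hqK
  exact ⟨(k, q), Prod.ext h1 (by dsimp only at h2 ⊢; omega)⟩

variable [Fintype ι]

def strip (ι : Type*) [Fintype ι] (N : ℕ) : Finset (ι × ℕ) := univ ×ˢ range N

def shiftedStrip (m : ι → ℤ) (N : ℕ) : Finset (ι × ℕ) :=
  (univ.sigma fun k => range (N - m k).toNat).map (Equiv.sigmaEquivProd ι ℕ).toEmbedding

@[simp]
theorem mem_strip {N : ℕ} {x : ι × ℕ} : x ∈ strip ι N ↔ x.2 < N := by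
  simp [strip]

theorem card_strip (N : ℕ) : (strip ι N).card = Fintype.card ι * N := by
  simp [strip]

@[simp]
theorem mem_shiftedStrip {m : ι → ℤ} {N : ℕ} {x : ι × ℕ} :
    x ∈ shiftedStrip m N ↔ (x.2 : ℤ) + m x.1 < N := by
  simp only [shiftedStrip, mem_map_equiv, mem_sigma, mem_univ, mem_range, true_and,
    Equiv.sigmaEquivProd_symm_apply]
  omega

theorem card_shiftedStrip {m : ι → ℤ} {N : ℕ} (hmN : ∀ k, m k ≤ N) :
    ((shiftedStrip m N).card : ℤ) = Fintype.card ι * N - ∑ k, m k := by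
  have hrow k : (((N : ℤ) - m k).toNat : ℤ) = N - m k := Int.toNat_of_nonneg (sub_nonneg.2 (hmN k))
  simp [shiftedStrip, card_sigma, hrow, sum_sub_distrib]

theorem IsLevelAbove.compl_range_subset_strip (hK : TranslatesOutside α m K)
    (hN : IsLevelAbove α m K N) : (Set.range α)ᶜ ⊆ strip ι N :=
  fun _ hy => mem_strip.2 <| not_le.1 fun hle => hy (hN.mem_range hK hle)

theorem IsLevelAbove.apply_mem_strip_iff (hK : TranslatesOutside α m K)
    (hN : IsLevelAbove α m K N) (x : ι × ℕ) : α x ∈ strip ι N ↔ x ∈ shiftedStrip m N := by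
  rw [mem_strip, mem_shiftedStrip]
  by_cases hx : x ∈ K
  · have := hN.2 x hx
    omega
  · have := (hK x hx).2
    omega

theorem IsLevelAbove.ncard_compl_range_add_card_shiftedStrip (hinj : Function.Injective α)
    (hK : TranslatesOutside α m K) (hN : IsLevelAbove α m K N) :
    (Set.range α)ᶜ.ncard + (shiftedStrip m N).card = (strip ι N).card := by
  classical
  have hcompl : (Set.range α)ᶜ = ↑((strip ι N).filter (· ∉ Set.range α)) := by
    ext y
    simpa using fun hy => mem_strip.1 (hN.compl_range_subset_strip hK hy)
  have himage : (shiftedStrip m N).image α = (strip ι N).filter (· ∈ Set.range α) := by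
    ext y
    simp only [mem_image, mem_filter, Set.mem_range, ← hN.apply_mem_strip_iff hK]
    constructor
    · rintro ⟨x, hx, rfl⟩
      exact ⟨hx, x, rfl⟩
    · rintro ⟨hy, x, rfl⟩
      exact ⟨x, hy, rfl⟩
  rw [hcompl, Set.ncard_coe_finset, ← card_image_of_injective (shiftedStrip m N) hinj, himage,
    add_comm]
  exact card_filter_add_card_filter_not _

end EventualTranslation

/-- For an injective eventual translation `α` of `Y_n` with translation tuple
`m`, the complement of the image of `α` is finite and the height
`h(α) = Σ mᵢ` equals its cardinality; in particular `h(α) ≥ 0`, with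
`h(α) = 0` iff `α` is a bijection. -/
theorem height_eq_card_complement_range (n : ℕ)
    (α : Fin n × ℕ → Fin n × ℕ) (m : Fin n → ℤ)
    (hinj : Function.Injective α) (hm : Translates n α m) :
    (Set.range α)ᶜ.Finite ∧
    (∑ i, m i) = ((Set.range α)ᶜ.ncard : ℤ) ∧
    0 ≤ ∑ i, m i ∧
    ((∑ i, m i) = 0 ↔ Function.Bijective α) := by
  obtain ⟨K, hK⟩ := hm
  obtain ⟨N, hN⟩ := exists_isLevelAbove α m K
  have hfin : (Set.range α)ᶜ.Finite :=
    (strip (Fin n) N).finite_toSet.subset (hN.compl_range_subset_strip hK)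
  have hcount := hN.ncard_compl_range_add_card_shiftedStrip hinj hK
  have hheight : ∑ i, m i = ((Set.range α)ᶜ.ncard : ℤ) := by
    have := congrArg (fun c : ℕ => (c : ℤ)) hcount
    push_cast [card_shiftedStrip hN.1, card_strip] at this
    linarith
  refine ⟨hfin, hheight, hheight ▸ Int.natCast_nonneg _, ?_⟩
  rw [hheight, Nat.cast_eq_zero, Set.ncard_eq_zero hfin, Set.compl_empty_iff, Set.range_eq_univ]
  exact (and_iff_right hinj).symm
end

section
/- Any two elements α₁, α₂ of M_n have a least upper bound with respect to the partial order given by left multiplication by the translation monoid T_n: there exists a unique β with β ≥ α₁, β ≥ α₂, and β' ≥ β whenever β' ≥ α₁ and β' ≥ α₂. -/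
def IsEventualTranslation (n : ℕ) (g : Fin n × ℕ → Fin n × ℕ) : Prop :=
  ∃ m : Fin n → ℤ, Translates n g m

/-- Membership in the monoid `M_n` of injective eventual translations of `Y_n`. -/
def InM (n : ℕ) (α : Fin n × ℕ → Fin n × ℕ) : Prop :=
  Function.Injective α ∧ IsEventualTranslation n α

/-- The element `t_1^{k_1} ⋯ t_n^{k_n}` of the translation monoid `T_n`. -/
def shiftMap (n : ℕ) (k : Fin n → ℕ) : Fin n × ℕ → Fin n × ℕ :=
  fun x => (x.1, x.2 + k x.1)

/-- `β ≥ α` iff `β = t·α` for some `t ∈ T_n`. -/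
def Mge (n : ℕ) (β α : Fin n × ℕ → Fin n × ℕ) : Prop :=
  ∃ k : Fin n → ℕ, β = α ∘ shiftMap n k

/-!
Far out on each ray `i` both `α₁` and `α₂` are translations, so `α₁` shifted by some `p` along
ray `i` coincides with `α₂` shifted by some `q`. An upper bound of `α₂` of the form `α₁ ∘ t`
is exactly a choice of such a `p` on every ray, so the least `p` on each ray gives the least upper
bound. It is unique because `≥` is antisymmetric on injective maps.
-/

variable {n : ℕ}

@[simp]
lemma shiftMap_mk (k : Fin n → ℕ) (i : Fin n) (ℓ : ℕ) : shiftMap n k (i, ℓ) = (i, ℓ + k i) :=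
  rfl

lemma shiftMap_zero : shiftMap n 0 = id := by
  funext x
  simp [shiftMap]

lemma shiftMap_comp_shiftMap (k k' : Fin n → ℕ) :
    shiftMap n k ∘ shiftMap n k' = shiftMap n (k + k') := by
  funext x
  simp only [shiftMap, Function.comp_apply, Pi.add_apply]
  ring_nf

lemma shiftMap_injective (k : Fin n → ℕ) : Function.Injective (shiftMap n k) := by
  rintro ⟨i, ℓ⟩ ⟨j, ℓ'⟩ h
  simp only [shiftMap_mk, Prod.mk.injEq] at h
  obtain ⟨rfl, h⟩ := h
  simp only [Prod.mk.injEq, true_and]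
  omega

lemma Translates.comp_shiftMap {g : Fin n × ℕ → Fin n × ℕ} {m : Fin n → ℤ}
    (h : Translates n g m) (k : Fin n → ℕ) :
    Translates n (g ∘ shiftMap n k) (fun i => m i + k i) := by
  obtain ⟨K, hK⟩ := h
  refine ⟨K.preimage (shiftMap n k) (shiftMap_injective k).injOn, fun x hx => ?_⟩
  obtain ⟨h₁, h₂⟩ := hK (shiftMap n k x) (by simpa using hx)
  refine ⟨h₁, ?_⟩
  simp only [shiftMap, Function.comp_apply] at h₁ h₂ ⊢
  push_cast at h₂
  linarith

lemma InM.comp_shiftMap {α : Fin n × ℕ → Fin n × ℕ} (h : InM n α) (k : Fin n → ℕ) :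
    InM n (α ∘ shiftMap n k) :=
  ⟨h.1.comp (shiftMap_injective k), _, h.2.choose_spec.comp_shiftMap k⟩

lemma Translates.exists_forall_ge {g : Fin n × ℕ → Fin n × ℕ} {m : Fin n → ℤ}
    (h : Translates n g m) (i : Fin n) :
    ∃ s, ∀ ℓ, s ≤ ℓ → (g (i, ℓ)).1 = i ∧ ((g (i, ℓ)).2 : ℤ) = ℓ + m i := by
  obtain ⟨K, hK⟩ := h
  refine ⟨K.sup Prod.snd + 1, fun ℓ hℓ => hK (i, ℓ) fun hmem => ?_⟩
  have := Finset.le_sup (f := Prod.snd) hmem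
  simp only at this
  omega

def RayMatch (n : ℕ) (α₁ α₂ : Fin n × ℕ → Fin n × ℕ) (i : Fin n) (p : ℕ) : Prop :=
  ∃ q, ∀ ℓ, α₁ (i, ℓ + p) = α₂ (i, ℓ + q)

lemma Translates.exists_rayMatch {α₁ α₂ : Fin n × ℕ → Fin n × ℕ} {m₁ m₂ : Fin n → ℤ}
    (h₁ : Translates n α₁ m₁) (h₂ : Translates n α₂ m₂) (i : Fin n) :
    ∃ p, RayMatch n α₁ α₂ i p := by
  obtain ⟨s₁, hs₁⟩ := h₁.exists_forall_ge i
  obtain ⟨s₂, hs₂⟩ := h₂.exists_forall_ge i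
  -- past `s₁ + s₂` both maps are translations; `p` and `q` equalize `p + m₁ i = q + m₂ i`
  refine ⟨s₁ + s₂ + (m₂ i - m₁ i).toNat, s₁ + s₂ + (m₁ i - m₂ i).toNat, fun ℓ => ?_⟩
  obtain ⟨e₁, f₁⟩ := hs₁ (ℓ + (s₁ + s₂ + (m₂ i - m₁ i).toNat)) (by omega)
  obtain ⟨e₂, f₂⟩ := hs₂ (ℓ + (s₁ + s₂ + (m₁ i - m₂ i).toNat)) (by omega)
  refine Prod.ext (e₁.trans e₂.symm) ?_
  push_cast at f₁ f₂
  omega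

lemma mge_comp_shiftMap_iff {α₁ α₂ : Fin n × ℕ → Fin n × ℕ} {a : Fin n → ℕ} :
    Mge n (α₁ ∘ shiftMap n a) α₂ ↔ ∀ i, RayMatch n α₁ α₂ i (a i) := by
  constructor
  · rintro ⟨b, hb⟩ i
    exact ⟨b i, fun ℓ => congrFun hb (i, ℓ)⟩
  · intro h
    choose b hb using h
    exact ⟨b, funext fun x => hb x.1 x.2⟩

lemma mge_comp_shiftMap_of_le (α : Fin n × ℕ → Fin n × ℕ) {a a' : Fin n → ℕ} (h : a ≤ a') :
    Mge n (α ∘ shiftMap n a') (α ∘ shiftMap n a) :=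
  ⟨a' - a, by rw [Function.comp_assoc, shiftMap_comp_shiftMap, add_tsub_cancel_of_le h]⟩

lemma eq_of_mge_of_mge {β γ : Fin n × ℕ → Fin n × ℕ} (hβ : Function.Injective β)
    (h : Mge n β γ) (h' : Mge n γ β) : β = γ := by
  obtain ⟨c, rfl⟩ := h
  obtain ⟨c', hc'⟩ := h'
  have hc : c = 0 := by
    funext i
    have := hβ (congrFun hc' (shiftMap n c (i, 0)))
    simp only [shiftMap_mk, Prod.mk.injEq, true_and] at this
    simp only [Pi.zero_apply]
    omega
  rw [hc, shiftMap_zero, Function.comp_id]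

/-- Any two elements of `M_n` have a (unique) least upper bound for the
partial order given by left multiplication by `T_n`. -/
theorem exists_unique_lub (n : ℕ) (α₁ α₂ : Fin n × ℕ → Fin n × ℕ)
    (h₁ : InM n α₁) (h₂ : InM n α₂) :
    ∃! β : Fin n × ℕ → Fin n × ℕ, InM n β ∧ Mge n β α₁ ∧ Mge n β α₂ ∧
      ∀ β', InM n β' → Mge n β' α₁ → Mge n β' α₂ → Mge n β' β := by
  classical
  obtain ⟨m₁, hm₁⟩ := h₁.2
  obtain ⟨m₂, hm₂⟩ := h₂.2
  have hmatch := hm₁.exists_rayMatch hm₂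
  set β := α₁ ∘ shiftMap n fun i => Nat.find (hmatch i)
  have hβ : InM n β := h₁.comp_shiftMap _
  have hβ₂ : Mge n β α₂ := mge_comp_shiftMap_iff.2 fun i => Nat.find_spec (hmatch i)
  have hlub : ∀ β', Mge n β' α₁ → Mge n β' α₂ → Mge n β' β := by
    rintro β' ⟨a', rfl⟩ h₂'
    exact mge_comp_shiftMap_of_le α₁ fun i =>
      Nat.find_min' (hmatch i) (mge_comp_shiftMap_iff.1 h₂' i)
  refine ⟨β, ⟨hβ, ⟨_, rfl⟩, hβ₂, fun β' _ => hlub β'⟩, ?_⟩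
  rintro γ ⟨hγ, hγ₁, hγ₂, hγlub⟩
  exact eq_of_mge_of_mge hγ.1 (hlub γ hγ₁ hγ₂) (hγlub β hβ ⟨_, rfl⟩ hβ₂)
end

section
/- For a vertex α of M_n with height h(α) = h, the set of maximal elements below α (elements β with α = t_i·β for some generator t_i) is in bijection with {1,…,n} × S(α), where S(α) = Y_n \ α(Y_n); in particular there are exactly n·h such elements. -/
/-!
Write `tᵢ = rayShift n i`. A map `β` with `α = β ∘ tᵢ` is determined by `α` and the single
value `β (i, 0)`, which must avoid the range of `α` for `β` to be injective; conversely,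
prepending any `s ∉ range α` to ray `i` of `α` gives an element of `M_n`, whose translation
vector is that of `α` minus `eᵢ`. So the maximal elements below `α` are parametrised by the ray
`i` and the point `s ∈ S(α)`, and `S(α)` is finite because an eventual translation hits every
point far out on each ray.
-/

open Function Set

section MaximalElements

variable {n : ℕ}

def rayShift (n : ℕ) (i : Fin n) : Fin n × ℕ → Fin n × ℕ :=
  shiftMap n (fun j => if j = i then 1 else 0)

def maximalElements (n : ℕ) (α : Fin n × ℕ → Fin n × ℕ) : Set (Fin n × ℕ → Fin n × ℕ) :=
  {β | InM n β ∧ ∃ i : Fin n, α = β ∘ rayShift n i}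

lemma rayShift_ne_zero (i : Fin n) (x : Fin n × ℕ) : rayShift n i x ≠ (i, 0) := by
  simp +contextual [rayShift, shiftMap]

lemma compl_singleton_subset_range_rayShift (i : Fin n) :
    {(i, 0)}ᶜ ⊆ range (rayShift n i) := by
  rintro ⟨j, l⟩ hx
  by_cases hj : j = i
  · subst hj
    obtain ⟨l, rfl⟩ := Nat.exists_eq_succ_of_ne_zero (by simpa using hx)
    exact ⟨(j, l), by simp [rayShift, shiftMap]⟩
  · exact ⟨(j, l), by simp [rayShift, shiftMap, hj]⟩

lemma Function.Injective.of_comp_eq_of_compl_singleton_subset_range {X Y Z : Type*}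
    {β : Z → Y} {g : X → Z} {f : X → Y} (hf : Injective f) (hβg : β ∘ g = f) {z₀ : Z}
    (hg : {z₀}ᶜ ⊆ range g) (hz₀ : β z₀ ∉ range f) : Injective β := by
  have key : ∀ a b, a ≠ z₀ → β a = β b → a = b := by
    intro a b ha hab
    obtain ⟨x, rfl⟩ := hg ha
    by_cases hb : b = z₀
    · subst hb
      exact (hz₀ ⟨x, by rw [← hβg]; exact hab⟩).elim
    obtain ⟨y, rfl⟩ := hg hb
    have hxy : f x = f y := by rw [← hβg]; exact hab
    rw [hf hxy]
  intro a b hab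
  rcases eq_or_ne a z₀ with rfl | ha
  · rcases eq_or_ne b a with rfl | hb
    · rfl
    · exact (key b _ hb hab.symm).symm
  · exact key a b ha hab

lemma Translates.of_comp_rayShift {β : Fin n × ℕ → Fin n × ℕ} {i : Fin n} {m : Fin n → ℤ}
    (h : Translates n (β ∘ rayShift n i) m) :
    Translates n β (fun j => m j - if j = i then 1 else 0) := by
  obtain ⟨K, hK⟩ := h
  refine ⟨insert (i, 0) (K.image (rayShift n i)), fun x hx => ?_⟩
  simp only [Finset.mem_insert, Finset.mem_image, not_or, not_exists, not_and] at hx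
  obtain ⟨y, rfl⟩ := compl_singleton_subset_range_rayShift i hx.1
  obtain ⟨h₁, h₂⟩ := hK y fun hy => hx.2 y hy rfl
  refine ⟨h₁, ?_⟩
  rw [comp_apply] at h₂
  rw [h₂]
  by_cases hy : y.1 = i <;> simp [rayShift, shiftMap, hy]

lemma Translates.exists_forall_mem_range {g : Fin n × ℕ → Fin n × ℕ} {m : Fin n → ℤ}
    (h : Translates n g m) : ∃ B : ℕ, ∀ j l, B ≤ l → (j, l) ∈ range g := by
  obtain ⟨K, hK⟩ := h
  refine ⟨K.sup Prod.snd + 1 + Finset.univ.sup fun j => (m j).natAbs, fun j l hl => ?_⟩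
  have hm : (m j).natAbs ≤ Finset.univ.sup fun j => (m j).natAbs :=
    Finset.le_sup (f := fun j => (m j).natAbs) (Finset.mem_univ j)
  have hx₂ : (((l : ℤ) - m j).toNat : ℤ) = l - m j := Int.toNat_of_nonneg (by omega)
  have hxK : (j, ((l : ℤ) - m j).toNat) ∉ K := fun hx => by
    have := Finset.le_sup (f := Prod.snd) hx
    omega
  obtain ⟨h₁, h₂⟩ := hK _ hxK
  dsimp only at h₂
  exact ⟨_, Prod.ext h₁ (by omega)⟩

lemma InM.finite_compl_range {α : Fin n × ℕ → Fin n × ℕ} (hα : InM n α) :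
    (range α)ᶜ.Finite := by
  obtain ⟨_, m, hm⟩ := hα
  obtain ⟨B, hB⟩ := hm.exists_forall_mem_range
  refine (Set.finite_univ.prod (Set.finite_Iio B)).subset fun ⟨j, l⟩ hjl => ?_
  simp only [mem_prod, mem_univ, mem_Iio, true_and]
  by_contra! hl
  exact hjl (hB j l hl)

def consRay (α : Fin n × ℕ → Fin n × ℕ) (i : Fin n) (s : Fin n × ℕ) :
    Fin n × ℕ → Fin n × ℕ := fun x =>
  if x.1 = i then
    match x.2 with
    | 0 => s
    | m + 1 => α (i, m)
  else α x

variable (α : Fin n × ℕ → Fin n × ℕ) (i : Fin n) (s : Fin n × ℕ)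

@[simp]
lemma consRay_apply_zero : consRay α i s (i, 0) = s := by simp [consRay]

lemma consRay_apply_of_ne {x : Fin n × ℕ} (h : x.1 ≠ i) : consRay α i s x = α x := by
  simp [consRay, h]

@[simp]
lemma consRay_comp_rayShift : consRay α i s ∘ rayShift n i = α := by
  funext ⟨j, l⟩
  by_cases h : j = i
  · subst h
    simp [consRay, rayShift, shiftMap]
  · simp [consRay, rayShift, shiftMap, h]

lemma eq_consRay_of_eq_comp_rayShift {β : Fin n × ℕ → Fin n × ℕ} (h : α = β ∘ rayShift n i) :
    β = consRay α i (β (i, 0)) := by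
  funext ⟨j, l⟩
  by_cases hj : j = i
  · subst hj
    cases l <;> simp [h, consRay, rayShift, shiftMap]
  · simp [h, consRay, rayShift, shiftMap, hj]

variable {α i s}

lemma InM.consRay (hα : InM n α) (hs : s ∉ range α) : InM n (consRay α i s) := by
  obtain ⟨hinj, m, hm⟩ := hα
  refine ⟨hinj.of_comp_eq_of_compl_singleton_subset_range (consRay_comp_rayShift α i s)
    (compl_singleton_subset_range_rayShift i) (by rwa [consRay_apply_zero]), _,
    Translates.of_comp_rayShift (m := m) (by rwa [consRay_comp_rayShift])⟩

lemma consRay_mem_maximalElements (hα : InM n α) (hs : s ∉ range α) :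
    consRay α i s ∈ maximalElements n α :=
  ⟨hα.consRay hs, i, (consRay_comp_rayShift α i s).symm⟩

lemma apply_zero_notMem_range_comp_rayShift {β : Fin n × ℕ → Fin n × ℕ} (hβ : Injective β) :
    β (i, 0) ∉ range (β ∘ rayShift n i) :=
  fun ⟨x, hx⟩ => rayShift_ne_zero i x (hβ hx)

variable (α) in
lemma consRay_injective : Injective fun p : Fin n × ↥(range α)ᶜ => consRay α p.1 p.2 := by
  rintro ⟨i, s, hs⟩ ⟨i', s', _⟩ h
  have hi : i = i' := by
    by_contra hne
    have := congrFun h (i, 0)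
    dsimp only at this
    rw [consRay_apply_zero, consRay_apply_of_ne α i' s' hne] at this
    exact hs ⟨_, this.symm⟩
  subst hi
  simpa using congrFun h (i, 0)

lemma exists_consRay_eq_of_mem_maximalElements {β : Fin n × ℕ → Fin n × ℕ}
    (hβ : β ∈ maximalElements n α) : ∃ p : Fin n × ↥(range α)ᶜ, consRay α p.1 p.2 = β := by
  obtain ⟨⟨hinj, -⟩, i, h⟩ := hβ
  exact ⟨(i, ⟨β (i, 0), h ▸ apply_zero_notMem_range_comp_rayShift hinj⟩),
    (eq_consRay_of_eq_comp_rayShift α i h).symm⟩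

noncomputable def maximalElementsEquiv (hα : InM n α) :
    Fin n × ↥(range α)ᶜ ≃ maximalElements n α :=
  Equiv.ofBijective (fun p => ⟨consRay α p.1 p.2, consRay_mem_maximalElements hα p.2.2⟩)
    ⟨fun _ _ h => consRay_injective α (congrArg Subtype.val h),
      fun ⟨_, hβ⟩ => (exists_consRay_eq_of_mem_maximalElements hβ).imp fun _ h => Subtype.ext h⟩

end MaximalElements

/-- For `α ∈ M_n` with height `h = |S(α)|` where `S(α) = Y_n ∖ α(Y_n)`, the set
of maximal elements below `α` (the `β ∈ M_n` with `α = t_i·β` for some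
generator `t_i`) is finite, in bijection with `{1,…,n} × S(α)`; in particular
it has exactly `n·h` elements. -/
theorem maximal_elements_card (n : ℕ) (α : Fin n × ℕ → Fin n × ℕ)
    (hα : InM n α) :
    {β | InM n β ∧ ∃ i : Fin n,
        α = β ∘ shiftMap n (fun j => if j = i then 1 else 0)}.Finite ∧
    Nonempty
      (↥{β | InM n β ∧ ∃ i : Fin n,
          α = β ∘ shiftMap n (fun j => if j = i then 1 else 0)} ≃
        Fin n × ↥((Set.range α)ᶜ)) ∧
    {β | InM n β ∧ ∃ i : Fin n,
        α = β ∘ shiftMap n (fun j => if j = i then 1 else 0)}.ncard =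
      n * (Set.range α)ᶜ.ncard := by
  change (maximalElements n α).Finite ∧ Nonempty (maximalElements n α ≃ _) ∧
    (maximalElements n α).ncard = _
  let e := maximalElementsEquiv hα
  have : Finite ↥(range α)ᶜ := hα.finite_compl_range.to_subtype
  have : Finite (maximalElements n α) := .of_equiv _ e
  refine ⟨toFinite _, ⟨e.symm⟩, ?_⟩
  rw [← Nat.card_coe_set_eq, ← Nat.card_congr e, Nat.card_prod, Nat.card_fin,
    Nat.card_coe_set_eq]
end

section
/- For n ≥ 3, Houghton's group H_n is generated by g_1,…,g_{n−1}: every eventual translation of Y_n is a product of the maps g_i and their inverses. -/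
/-- The generator `g_i` of Houghton's group (rays indexed by `Fin n`, ray `0`
playing the role of `R_1` and ray `i` that of `R_{i+1}`). -/
def gFun (n : ℕ) [NeZero n] (i : Fin n) : Fin n × ℕ → Fin n × ℕ := fun x =>
  if x.1 = 0 then (if x.2 = 0 then (i, 0) else (0, x.2 - 1))
  else if x.1 = i then (i, x.2 + 1) else x

/-!
An eventual translation `g` shifts ray `i` by some `m i` far out, and these translation vectors
add under composition. For a high level `N`, `g⁻¹` maps the points lying below level `N + m i` on
each ray `i` injectively into the `n * N` points below level `N`, so `∑ i, m i ≤ 0`; applied to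
`g⁻¹` this gives `∑ i, m i = 0`. The generator `g_i` has vector `e_i - e_0`, and these span the
vectors of sum zero, so some `w` in the subgroup generated by the `g_i` has the vector of `g`, and
`g * w⁻¹` has finite support. The commutator `⁅g_i, g_j⁆` is the transposition of `(i, 0)` and
`(j, 0)`. Conjugating it by powers of `g_i`, which fix the ray `j`, moves `(i, 0)` to any point of
the rays `0` and `i`; with a third ray available (`n ≥ 3`) this yields every transposition, and
finitary permutations are products of transpositions.
-/

open Equiv Finset MulAction

namespace Translates

variable {n : ℕ} {g h : Perm (Fin n × ℕ)} {a b m : Fin n → ℤ}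

theorem one : Translates n ⇑(1 : Perm (Fin n × ℕ)) 0 :=
  ⟨∅, fun x _ => by simp⟩

theorem mul (hg : Translates n ⇑g a) (hh : Translates n ⇑h b) :
    Translates n ⇑(g * h) (a + b) := by
  obtain ⟨K, hK⟩ := hg
  obtain ⟨L, hL⟩ := hh
  refine ⟨L ∪ K.preimage h h.injective.injOn, fun x hx => ?_⟩
  simp only [mem_union, mem_preimage, not_or] at hx
  obtain ⟨hL₁, hL₂⟩ := hL x hx.1
  obtain ⟨hK₁, hK₂⟩ := hK (h x) hx.2
  refine ⟨hK₁.trans hL₁, ?_⟩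
  rw [Perm.mul_apply, hK₂, hL₂, hL₁, Pi.add_apply]
  ring

theorem inv (hg : Translates n ⇑g a) : Translates n ⇑g⁻¹ (-a) := by
  obtain ⟨K, hK⟩ := hg
  refine ⟨K.image g, fun x hx => ?_⟩
  obtain ⟨y, rfl⟩ := g.surjective x
  obtain ⟨h₁, h₂⟩ := hK y fun hy => hx (mem_image_of_mem g hy)
  simp only [Perm.coe_inv, symm_apply_apply, Pi.neg_apply, h₁, h₂, true_and]
  ring

theorem finite_compl_fixedBy (hg : Translates n ⇑g 0) : (fixedBy (Fin n × ℕ) g)ᶜ.Finite := by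
  obtain ⟨K, hK⟩ := hg
  refine K.finite_toSet.subset fun x hx => ?_
  by_contra hxK
  obtain ⟨h₁, h₂⟩ := hK x hxK
  exact hx (Prod.ext h₁ (by simpa using h₂))

end Translates

def translationSubgroup {n : ℕ} (H : Subgroup (Perm (Fin n × ℕ))) : AddSubgroup (Fin n → ℤ) where
  carrier := {m | ∃ σ ∈ H, Translates n ⇑σ m}
  zero_mem' := ⟨1, H.one_mem, Translates.one⟩
  add_mem' := fun ⟨σ, hσ, hσm⟩ ⟨τ, hτ, hτm⟩ => ⟨σ * τ, H.mul_mem hσ hτ, hσm.mul hτm⟩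
  neg_mem' := fun ⟨σ, hσ, hσm⟩ => ⟨σ⁻¹, H.inv_mem hσ, hσm.inv⟩

section Counting

variable {n : ℕ}

def below (h : Fin n → ℕ) : Finset (Fin n × ℕ) :=
  univ.biUnion fun i => {i} ×ˢ range (h i)

theorem mem_below {h : Fin n → ℕ} {x : Fin n × ℕ} : x ∈ below h ↔ x.2 < h x.1 := by
  simp [below, Prod.ext_iff]

theorem card_below (h : Fin n → ℕ) : #(below h) = ∑ i, h i := by
  rw [below, card_biUnion]
  · simp
  · intro i _ j _ hij
    simp [disjoint_left, hij.symm]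

theorem Translates.sum_nonpos {g : Perm (Fin n × ℕ)} {m : Fin n → ℤ} (hg : Translates n ⇑g m) :
    ∑ i, m i ≤ 0 := by
  obtain ⟨K, hK⟩ := hg
  obtain ⟨N, hN⟩ : ∃ N, ∀ x ∈ K, x.2 < N :=
    ⟨K.sup Prod.snd + 1, fun x hx => Nat.lt_succ_of_le (le_sup (f := Prod.snd) hx)⟩
  have hmaps : Set.MapsTo g.symm (below fun i => (N + m i).toNat) ↑(below fun _ : Fin n => N) := by
    intro y hy
    simp only [mem_coe, mem_below, Int.lt_toNat] at hy ⊢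
    by_contra hx
    obtain ⟨h₁, h₂⟩ := hK _ fun h => hx (hN _ h)
    rw [apply_symm_apply] at h₁ h₂
    rw [← h₁] at h₂
    omega
  have hcard := card_le_card_of_injOn _ hmaps g.symm.injective.injOn
  rw [card_below, card_below, sum_const, card_univ, Fintype.card_fin, smul_eq_mul] at hcard
  calc ∑ i, m i = ∑ i, ((N : ℤ) + m i) - n * N := by simp [sum_add_distrib]
    _ ≤ ∑ i, ((N + m i).toNat : ℤ) - n * N := by gcongr with i; exact Int.self_le_toNat _
    _ ≤ 0 := by linarith

theorem Translates.sum_eq_zero {g : Perm (Fin n × ℕ)} {m : Fin n → ℤ} (hg : Translates n ⇑g m) :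
    ∑ i, m i = 0 :=
  le_antisymm hg.sum_nonpos (by simpa using hg.inv.sum_nonpos)

end Counting

section Generators

open scoped commutatorElement

variable {n : ℕ} [NeZero n] {i j : Fin n}

def gInvFun (n : ℕ) [NeZero n] (i : Fin n) : Fin n × ℕ → Fin n × ℕ := fun x =>
  if x.1 = 0 then (0, x.2 + 1)
  else if x.1 = i then (if x.2 = 0 then (0, 0) else (i, x.2 - 1)) else x

def gPerm (n : ℕ) [NeZero n] (i : Fin n) (hi : i ≠ 0) : Perm (Fin n × ℕ) where
  toFun := gFun n i
  invFun := gInvFun n i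
  left_inv := by
    rintro ⟨a, p⟩
    grind [gFun, gInvFun]
  right_inv := by
    rintro ⟨a, p⟩
    grind [gFun, gInvFun]

variable (hi : i ≠ 0) (hj : j ≠ 0)

@[simp] theorem coe_gPerm : ⇑(gPerm n i hi) = gFun n i := rfl

theorem gPerm_apply_zero_zero : gPerm n i hi (0, 0) = (i, 0) := by
  simp [gFun]

theorem gPerm_apply_zero_succ (p : ℕ) : gPerm n i hi (0, p + 1) = (0, p) := by
  simp [gFun]

theorem gPerm_apply_ray (p : ℕ) : gPerm n i hi (i, p) = (i, p + 1) := by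
  simp [gFun, hi]

theorem gPerm_apply_of_ne {x : Fin n × ℕ} (h₀ : x.1 ≠ 0) (h : x.1 ≠ i) : gPerm n i hi x = x := by
  simp [gFun, h₀, h]

theorem gPerm_inv_apply_zero (p : ℕ) : (gPerm n i hi)⁻¹ (0, p) = (0, p + 1) :=
  Perm.inv_eq_iff_eq.2 (gPerm_apply_zero_succ hi p).symm

theorem gPerm_inv_apply_ray_zero : (gPerm n i hi)⁻¹ (i, 0) = (0, 0) :=
  Perm.inv_eq_iff_eq.2 (gPerm_apply_zero_zero hi).symm

theorem gPerm_inv_apply_ray_succ (p : ℕ) : (gPerm n i hi)⁻¹ (i, p + 1) = (i, p) :=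
  Perm.inv_eq_iff_eq.2 (gPerm_apply_ray hi p).symm

theorem gPerm_inv_apply_of_ne {x : Fin n × ℕ} (h₀ : x.1 ≠ 0) (h : x.1 ≠ i) :
    (gPerm n i hi)⁻¹ x = x :=
  Perm.inv_eq_iff_eq.2 (gPerm_apply_of_ne hi h₀ h).symm

theorem translates_gPerm : Translates n ⇑(gPerm n i hi) (Pi.single i 1 - Pi.single 0 1) := by
  refine ⟨{(0, 0)}, ?_⟩
  rintro ⟨a, p⟩ hx
  simp only [mem_singleton, Prod.mk.injEq, not_and] at hx
  simp only [coe_gPerm, gFun, Pi.sub_apply, Pi.single_apply]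
  split_ifs <;> grind

theorem gPerm_pow_apply_ray (p : ℕ) : (gPerm n i hi ^ p) (i, 0) = (i, p) := by
  induction p with
  | zero => rfl
  | succ p ih => rw [pow_succ', Perm.mul_apply, ih, gPerm_apply_ray]

theorem gPerm_pow_apply_zero (p : ℕ) : (gPerm n i hi ^ (p + 1)) (0, p) = (i, 0) := by
  induction p with
  | zero => exact gPerm_apply_zero_zero hi
  | succ p ih => rw [pow_succ, Perm.mul_apply, gPerm_apply_zero_succ, ih]

theorem exists_zpow_gPerm_apply_eq {x : Fin n × ℕ} (hx : x.1 = 0 ∨ x.1 = i) :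
    ∃ z : ℤ, (gPerm n i hi ^ z) (i, 0) = x := by
  obtain ⟨a, p⟩ := x
  obtain rfl | rfl := hx
  · refine ⟨-(p + 1 : ℕ), ?_⟩
    rw [zpow_neg, zpow_natCast, Perm.inv_eq_iff_eq, gPerm_pow_apply_zero]
  · exact ⟨p, by rw [zpow_natCast, gPerm_pow_apply_ray]⟩

theorem commutator_gPerm (hij : i ≠ j) :
    ⁅gPerm n i hi, gPerm n j hj⁆ = swap (i, 0) (j, 0) := by
  ext1 ⟨a, p⟩
  simp only [commutatorElement_def, Perm.mul_apply]
  by_cases ha₀ : a = 0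
  · subst ha₀
    rw [gPerm_inv_apply_zero, gPerm_inv_apply_zero, gPerm_apply_zero_succ, gPerm_apply_zero_succ,
      swap_apply_of_ne_of_ne] <;> simp [hi.symm, hj.symm]
  by_cases hai : a = i
  · subst hai
    rcases p with _ | p
    · rw [gPerm_inv_apply_of_ne hj hi hij, gPerm_inv_apply_ray_zero, gPerm_apply_zero_zero,
        gPerm_apply_of_ne hi hj hij.symm, swap_apply_left]
    · rw [gPerm_inv_apply_of_ne hj hi hij, gPerm_inv_apply_ray_succ, gPerm_apply_of_ne hj hi hij,
        gPerm_apply_ray, swap_apply_of_ne_of_ne] <;> simp [hij]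
  by_cases haj : a = j
  · subst haj
    rcases p with _ | p
    · rw [gPerm_inv_apply_ray_zero, gPerm_inv_apply_zero, gPerm_apply_zero_succ,
        gPerm_apply_zero_zero, swap_apply_right]
    · rw [gPerm_inv_apply_ray_succ, gPerm_inv_apply_of_ne hi hj hij.symm,
        gPerm_apply_ray, gPerm_apply_of_ne hi hj hij.symm, swap_apply_of_ne_of_ne] <;> simp
  · rw [gPerm_inv_apply_of_ne hj ha₀ haj, gPerm_inv_apply_of_ne hi ha₀ hai,
      gPerm_apply_of_ne hj ha₀ haj, gPerm_apply_of_ne hi ha₀ hai, swap_apply_of_ne_of_ne] <;>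
      simp [hai, haj]

end Generators

theorem swap_apply_mem {α : Type*} [DecidableEq α] {H : Subgroup (Perm α)} {a b : α} {σ : Perm α}
    (hab : swap a b ∈ H) (hσ : σ ∈ H) : swap (σ a) (σ b) ∈ H := by
  rw [swap_apply_apply]
  exact H.mul_mem (H.mul_mem hσ hab) (H.inv_mem hσ)

section Subgroup

open scoped commutatorElement

variable {n : ℕ} [NeZero n]

def gSubgroup (n : ℕ) [NeZero n] : Subgroup (Perm (Fin n × ℕ)) :=
  Subgroup.closure {σ | ∃ i : Fin n, i ≠ 0 ∧ ⇑σ = gFun n i}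

theorem gPerm_mem_gSubgroup {i : Fin n} (hi : i ≠ 0) : gPerm n i hi ∈ gSubgroup n :=
  Subgroup.subset_closure ⟨i, hi, rfl⟩

theorem swap_ray_zero_mem_gSubgroup {i j : Fin n} (hi : i ≠ 0) (hj : j ≠ 0) :
    swap (i, 0) (j, 0) ∈ gSubgroup n := by
  obtain rfl | hij := eq_or_ne i j
  · rw [swap_self]
    exact one_mem _
  have hgi := gPerm_mem_gSubgroup hi
  have hgj := gPerm_mem_gSubgroup hj
  rw [← commutator_gPerm hi hj hij, commutatorElement_def]
  exact mul_mem (mul_mem (mul_mem hgi hgj) (inv_mem hgi)) (inv_mem hgj)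

theorem swap_mem_gSubgroup_of_fst_ne (hn : 3 ≤ n) {x : Fin n × ℕ} {j : Fin n} (hj : j ≠ 0)
    (hxj : x.1 ≠ j) : swap x (j, 0) ∈ gSubgroup n := by
  obtain ⟨i, hi, hij, hx⟩ : ∃ i, i ≠ 0 ∧ i ≠ j ∧ (x.1 = 0 ∨ x.1 = i) := by
    by_cases hx₀ : x.1 = 0
    · obtain ⟨i, hi, hij⟩ := ENat.exists_ne_ne_of_three_le (by simpa using hn) 0 j
      exact ⟨i, hi, hij, .inl hx₀⟩
    · exact ⟨x.1, hx₀, hxj, .inr rfl⟩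
  obtain ⟨z, hz⟩ := exists_zpow_gPerm_apply_eq hi hx
  have hfix : (gPerm n i hi ^ z) (j, 0) = (j, 0) :=
    Perm.zpow_apply_eq_self_of_apply_eq_self (gPerm_apply_of_ne hi hj hij.symm) z
  rw [← hz, ← hfix]
  exact swap_apply_mem (swap_ray_zero_mem_gSubgroup hi hj)
    ((gSubgroup n).zpow_mem (gPerm_mem_gSubgroup hi) z)

theorem swap_mem_gSubgroup (hn : 3 ≤ n) (x y : Fin n × ℕ) : swap x y ∈ gSubgroup n := by
  obtain ⟨i, hi, hxi⟩ := ENat.exists_ne_ne_of_three_le (by simpa using hn) 0 x.1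
  obtain ⟨j, hj, hyj⟩ := ENat.exists_ne_ne_of_three_le (by simpa using hn) 0 y.1
  refine SubmonoidClass.swap_mem_trans _ (swap_mem_gSubgroup_of_fst_ne hn hi hxi.symm) ?_
  refine SubmonoidClass.swap_mem_trans _ (swap_ray_zero_mem_gSubgroup hi hj) ?_
  rw [swap_comm]
  exact swap_mem_gSubgroup_of_fst_ne hn hj hyj.symm

theorem mem_gSubgroup_of_finite_compl_fixedBy (hn : 3 ≤ n) {σ : Perm (Fin n × ℕ)}
    (hσ : (fixedBy (Fin n × ℕ) σ)ᶜ.Finite) : σ ∈ gSubgroup n := by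
  refine Subgroup.closure_le _ |>.2 ?_ (mem_closure_isSwap'.2 hσ)
  rintro _ ⟨x, y, -, rfl⟩
  exact swap_mem_gSubgroup hn x y

end Subgroup

theorem mem_translationSubgroup_gSubgroup_of_sum_eq_zero {n : ℕ} [NeZero n] {m : Fin n → ℤ}
    (hm : ∑ i, m i = 0) : m ∈ translationSubgroup (gSubgroup n) := by
  have hgen : ∀ i, Pi.single i 1 - Pi.single 0 1 ∈ translationSubgroup (gSubgroup n) := by
    intro i
    by_cases hi : i = 0
    · rw [hi, sub_self]
      exact zero_mem _
    · exact ⟨_, gPerm_mem_gSubgroup hi, translates_gPerm hi⟩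
  have hm_eq : m = ∑ i, m i • (Pi.single i 1 - Pi.single 0 1 : Fin n → ℤ) := calc
    m = ∑ i, Pi.single i (m i) := (univ_sum_single m).symm
    _ = _ := by
      simp_rw [smul_sub, sum_sub_distrib, ← sum_smul, hm, zero_smul, sub_zero, ← Pi.single_smul,
        smul_eq_mul, mul_one]
  rw [hm_eq]
  exact sum_mem fun i _ => zsmul_mem (hgen i) _

/-- For `n ≥ 3`, Houghton's group `H_n` is generated by `g_1, …, g_{n−1}`:
every bijective eventual translation of `Y_n` lies in the subgroup of
`Perm Y_n` generated by the permutations `g_i`. -/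
theorem houghton_generated_by_gi (n : ℕ) [NeZero n] (hn : 3 ≤ n)
    (g : Equiv.Perm (Fin n × ℕ)) (hg : IsEventualTranslation n ⇑g) :
    g ∈ Subgroup.closure
      {σ : Equiv.Perm (Fin n × ℕ) | ∃ i : Fin n, i ≠ 0 ∧ ⇑σ = gFun n i} := by
  obtain ⟨m, hm⟩ := hg
  obtain ⟨w, hw, hwm⟩ := mem_translationSubgroup_gSubgroup_of_sum_eq_zero hm.sum_eq_zero
  have hgw : Translates n ⇑(g * w⁻¹) 0 := add_neg_cancel m ▸ hm.mul hwm.inv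
  have hgw_mem := mem_gSubgroup_of_finite_compl_fixedBy hn hgw.finite_compl_fixedBy
  exact inv_mul_cancel_right g w ▸ (gSubgroup n).mul_mem hgw_mem hw
end
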